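/- (Zeros of the interpolation error) Under the hypotheses of the Hermite interpolation formula — σ a finite positive Borel measure with infinite support contained in a compact interval F, f(z) := ∫ dσ(t)/(t − z), real nodes ζ_1, …, ζ_{2n} ∉ F, W(z) := ∏_{k=1}^{2n}(z − ζ_k), P, Q polynomials with deg P ≤ n − 1, deg Q ≤ n, Q ≢ 0, and (Qf − P)/W extending analytically to ℂ \ F — for every real x ∉ F one has f(x) − P(x)/Q(x) = 0 if and only if W(x) = 0; that is, on ℝ \ F the error vanishes exactly at the interpolation nodes. -/

import Mathlib

open Polynomial Filter MeasureTheory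

/-- The (topological) support of a measure `σ` on `ℝ`. -/
def msupport (σ : Measure ℝ) : Set ℝ := {x | ∀ U ∈ nhds x, σ U ≠ 0}

/-!
Put `W(z) = ∏ (z - ζₖ)` and `u(z) = ∫ Q(t)/W(t) dσ(t)/(t - z)`. Splitting off the polynomial
parts `L_t[(p(t) - p(z))/(t - z)]` of the Cauchy transforms, `Q f - P - W u` is a polynomial of
degree `< 2n` which equals `W (h - u)` with `h - u` continuous off `F`; so `W` divides it and it
vanishes. Thus `h = u`, and the top coefficients of the polynomial part of `W u` say that
`Q/W dσ` annihilates all polynomials of degree `< n`. Applied to `(Q̄(t) - Q̄(x))/(t - x)` this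
gives `Q̄(x) u(x) = ∫ |Q(t)|² / (W(t) (t - x)) dσ(t)`, which is a nonzero real number: `W(t)(t - x)`
has constant sign on `F`, and `Q` cannot vanish on the infinite support of `σ`. Hence `Q(x) ≠ 0`
and `h(x) ≠ 0` off the nodes, so `f - P/Q = W h / Q` vanishes at a real `x ∉ F` exactly when
`W(x) = 0`.
-/

open Finset

namespace Polynomial

variable {R : Type*} [CommRing R]

theorem coeff_divX_iterate (p : R[X]) (k m : ℕ) : (divX^[k] p).coeff m = p.coeff (m + k) := by
  induction k generalizing p with
  | zero => rfl
  | succ k ih => rw [Function.iterate_succ_apply, ih, coeff_divX]; rfl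

theorem divX_iterate_eq_zero {p : R[X]} {k : ℕ} (hk : p.natDegree < k) : divX^[k] p = 0 := by
  ext m
  rw [coeff_divX_iterate, coeff_zero]
  exact coeff_eq_zero_of_natDegree_lt (by omega)

theorem Monic.divX_iterate [Nontrivial R] {p : R[X]} (hp : p.Monic) {k : ℕ}
    (hk : k ≤ p.natDegree) :
    (divX^[k] p).Monic ∧ (divX^[k] p).natDegree = p.natDegree - k := by
  have hlead : (divX^[k] p).coeff (p.natDegree - k) = 1 := by
    rw [coeff_divX_iterate, Nat.sub_add_cancel hk]; exact hp
  have hdeg : (divX^[k] p).natDegree = p.natDegree - k := by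
    refine natDegree_eq_of_le_of_coeff_ne_zero ?_ (by simp [hlead])
    refine natDegree_le_iff_coeff_eq_zero.2 fun m hm => ?_
    rw [coeff_divX_iterate]
    exact coeff_eq_zero_of_natDegree_lt (by omega)
  exact ⟨by rw [Monic, Polynomial.leadingCoeff, hdeg, hlead], hdeg⟩

theorem X_sub_C_mul_sum_divX_iterate (p : R[X]) (y : R) :
    (X - C y) * ∑ i ∈ range (p.natDegree + 1), y ^ i • divX^[i + 1] p = p - C (p.eval y) := by
  have hstep : ∀ i, (X - C y) * (y ^ i • divX^[i + 1] p) =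
      (y ^ i • divX^[i] p - y ^ (i + 1) • divX^[i + 1] p) - C (p.coeff i * y ^ i) := by
    intro i
    have h := divX_mul_X_add (divX^[i] p)
    rw [coeff_divX_iterate, zero_add, ← Function.iterate_succ_apply' divX] at h
    rw [← h]
    simp only [smul_eq_C_mul, C_mul, pow_succ]
    ring
  rw [mul_sum, sum_congr rfl fun i _ => hstep i, sum_sub_distrib, sum_range_sub',
    divX_iterate_eq_zero (Nat.lt_succ_self _), smul_zero, sub_zero, pow_zero, one_smul,
    Function.iterate_zero_apply, ← map_sum, ← eval_eq_sum_range]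

theorem map_eq_zero_of_forall_monic {M : Type*} [AddCommGroup M] [Module R M]
    (L : R[X] →ₗ[R] M) {n : ℕ} (hL : ∀ d < n, ∃ q : R[X], q.Monic ∧ q.natDegree = d ∧ L q = 0)
    {p : R[X]} (hp : p.degree < n) : L p = 0 := by
  induction n generalizing p with
  | zero => rw [degree_eq_bot.1 (Nat.WithBot.lt_zero_iff.1 hp), map_zero]
  | succ n ih =>
    obtain ⟨q, hq, hqn, hLq⟩ := hL n n.lt_succ_self
    have hlower : (p - p.coeff n • q).degree < n := by
      refine (degree_lt_iff_coeff_zero _ _).2 fun m hm => ?_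
      rw [coeff_sub, coeff_smul, smul_eq_mul]
      rcases hm.eq_or_lt with rfl | hm
      · rw [← hqn, hq.coeff_natDegree, mul_one, sub_self]
      · have hpm : p.coeff m = 0 := coeff_eq_zero_of_degree_lt (hp.trans_le (by exact_mod_cast hm))
        have hqm : q.coeff m = 0 := coeff_eq_zero_of_natDegree_lt (by omega)
        rw [hpm, hqm, mul_zero, sub_zero]
    have := ih (fun d hd => hL d (hd.trans n.lt_succ_self)) hlower
    rwa [map_sub, map_smul, hLq, smul_zero, sub_zero] at this

/-- The polynomial `z ↦ L_t[(p(t) - p(z)) / (t - z)]`; for `L` an integral this is the polynomial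
of the second kind of `p`. -/
noncomputable def associatedPoly (L : R[X] →ₗ[R] R) (p : R[X]) : R[X] :=
  ∑ i ∈ range (p.natDegree + 1), C (L (divX^[i + 1] p)) * X ^ i

variable (L : R[X] →ₗ[R] R)

theorem coeff_associatedPoly (p : R[X]) (m : ℕ) :
    (associatedPoly L p).coeff m = L (divX^[m + 1] p) := by
  simp only [associatedPoly, finsetSum_coeff, coeff_C_mul_X_pow, sum_ite_eq, mem_range]
  split_ifs with hm
  · rfl
  · rw [divX_iterate_eq_zero (by omega), map_zero]

theorem eval_associatedPoly (p : R[X]) (y : R) :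
    (associatedPoly L p).eval y = L (∑ i ∈ range (p.natDegree + 1), y ^ i • divX^[i + 1] p) := by
  simp only [associatedPoly, eval_finsetSum, eval_mul, eval_C, eval_pow, eval_X, map_sum,
    map_smul, smul_eq_mul, mul_comm]

theorem degree_associatedPoly_lt (p : R[X]) : (associatedPoly L p).degree < p.natDegree := by
  refine (degree_lt_iff_coeff_zero _ _).2 fun m hm => ?_
  rw [coeff_associatedPoly, divX_iterate_eq_zero (by omega), map_zero]

theorem associatedPoly_eq_zero {n : ℕ} (hL : ∀ q : R[X], q.degree < n → L q = 0) {p : R[X]}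
    (hp : p.degree ≤ n) : associatedPoly L p = 0 := by
  ext m
  rw [coeff_associatedPoly, coeff_zero]
  refine hL _ ((degree_lt_iff_coeff_zero _ _).2 fun j hj => ?_)
  rw [coeff_divX_iterate]
  exact coeff_eq_zero_of_degree_lt (hp.trans_lt (by exact_mod_cast (by omega : n < j + (m + 1))))

theorem map_eq_zero_of_degree_associatedPoly_lt [Nontrivial R] {W : R[X]} (hW : W.Monic) {n : ℕ}
    (hn : 2 * n ≤ W.natDegree) (hLW : (associatedPoly L W).degree < n) {p : R[X]}
    (hp : p.degree < n) : L p = 0 := by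
  refine map_eq_zero_of_forall_monic L (fun d hd => ?_) hp
  obtain ⟨hmonic, hdeg⟩ := hW.divX_iterate (k := W.natDegree - d) (by omega)
  refine ⟨_, hmonic, by omega, ?_⟩
  have h := coeff_eq_zero_of_degree_lt (n := W.natDegree - d - 1)
    (hLW.trans_le (by exact_mod_cast (by omega : n ≤ W.natDegree - d - 1)))
  rwa [coeff_associatedPoly, Nat.sub_add_cancel (by omega)] at h

end Polynomial

theorem prod_X_sub_C_dvd_of_forall_eval_eq {𝕜 ι : Type*} [NontriviallyNormedField 𝕜]
    {Ω : Set 𝕜} (hΩ : IsOpen Ω) {G : 𝕜 → 𝕜} (hG : ContinuousOn G Ω) {ζ : ι → 𝕜} (s : Finset ι)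
    (hζ : ∀ k ∈ s, ζ k ∈ Ω) {D : 𝕜[X]} (hD : ∀ z ∈ Ω, D.eval z = (∏ k ∈ s, (z - ζ k)) * G z) :
    (∏ k ∈ s, (X - C (ζ k))) ∣ D := by
  classical
  induction s using Finset.induction_on generalizing D with
  | empty => simp
  | @insert k s hk ih =>
    have hkΩ : ζ k ∈ Ω := hζ k (mem_insert_self k s)
    have hroot : D.IsRoot (ζ k) := by simp [IsRoot, hD _ hkΩ, prod_insert hk]
    set D₁ := D /ₘ (X - C (ζ k))
    have hD₁ : (X - C (ζ k)) * D₁ = D := mul_divByMonic_eq_iff_isRoot.2 hroot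
    have hoff : ∀ z ∈ Ω, z ≠ ζ k → D₁.eval z = (∏ j ∈ s, (z - ζ j)) * G z := by
      intro z hz hzk
      have h := hD z hz
      rw [← hD₁, prod_insert hk, eval_mul, eval_sub, eval_X, eval_C, mul_assoc] at h
      exact mul_left_cancel₀ (sub_ne_zero.2 hzk) h
    -- at the node itself, by continuity
    have hnode : D₁.eval (ζ k) = (∏ j ∈ s, (ζ k - ζ j)) * G (ζ k) := by
      have hcont : ContinuousAt (fun z => (∏ j ∈ s, (z - ζ j)) * G z) (ζ k) :=
        (continuous_finsetProd _ fun j _ => continuous_id.sub continuous_const).continuousAt.mul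
          (hG.continuousAt (hΩ.mem_nhds hkΩ))
      refine ((D₁.continuous.continuousAt.eventuallyEq_nhds_iff_eventuallyEq_nhdsNE
        hcont).1 ?_).eq_of_nhds
      filter_upwards [nhdsWithin_le_nhds (hΩ.mem_nhds hkΩ), self_mem_nhdsWithin] with z hz hzk
      exact hoff z hz hzk
    have hD₁Ω : ∀ z ∈ Ω, D₁.eval z = (∏ j ∈ s, (z - ζ j)) * G z := fun z hz =>
      (eq_or_ne z (ζ k)).elim (fun h => h ▸ hnode) (hoff z hz)
    rw [prod_insert hk, ← hD₁]
    exact mul_dvd_mul_left _ (ih (fun j hj => hζ j (mem_insert_of_mem hj)) hD₁Ω)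

theorem eq_zero_of_forall_eval_eq_prod_mul {𝕜 ι : Type*} [NontriviallyNormedField 𝕜] [Fintype ι]
    {Ω : Set 𝕜} (hΩ : IsOpen Ω) {G : 𝕜 → 𝕜} (hG : ContinuousOn G Ω) {ζ : ι → 𝕜}
    (hζ : ∀ k, ζ k ∈ Ω) {D : 𝕜[X]} (hD : ∀ z ∈ Ω, D.eval z = (∏ k, (z - ζ k)) * G z)
    (hdeg : D.degree < Fintype.card ι) : D = 0 := by
  refine eq_zero_of_dvd_of_degree_lt
    (prod_X_sub_C_dvd_of_forall_eval_eq hΩ hG univ (fun k _ => hζ k) hD) ?_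
  rwa [degree_eq_natDegree (monic_prod_X_sub_C ζ univ).ne_zero,
    natDegree_finsetProd_X_sub_C_eq_card, card_univ]

theorem msupport_subset {σ : Measure ℝ} {Z : Set ℝ} (hZ : IsClosed Z) (h0 : σ Zᶜ = 0) :
    msupport σ ⊆ Z :=
  fun _ hx => by_contra fun hxZ => hx Zᶜ (hZ.isOpen_compl.mem_nhds hxZ) h0

theorem not_ae_eval_eq_zero {σ : Measure ℝ} (hinf : (msupport σ).Infinite) {Q : ℂ[X]}
    (hQ : Q ≠ 0) :
    ¬ ∀ᵐ t : ℝ ∂σ, Q.eval (t : ℂ) = 0 := by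
  intro hae
  have hclosed : IsClosed {t : ℝ | Q.eval (t : ℂ) = 0} :=
    isClosed_eq (Q.continuous.comp Complex.continuous_ofReal) continuous_const
  exact hinf (((Q.finite_setOfPred_isRoot hQ).preimage Complex.ofReal_injective.injOn).subset
    (msupport_subset hclosed (ae_iff.1 hae)))

section CauchyTransform

variable {σ : Measure ℝ} {K : Set ℝ}

noncomputable def cauchyTransform (σ : Measure ℝ) (ρ : ℝ → ℂ) (z : ℂ) : ℂ :=
  ∫ t, ρ t * ((t : ℂ) - z)⁻¹ ∂σ

/-- The linear functional `p ↦ ∫ ρ p dσ`, defined through its moments so that it is linear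
without integrability assumptions. -/
noncomputable def momentFunctional (σ : Measure ℝ) (ρ : ℝ → ℂ) : ℂ[X] →ₗ[ℂ] ℂ :=
  lsum fun m => LinearMap.mulRight ℂ (∫ t, ρ t * (t : ℂ) ^ m ∂σ)

theorem cauchyTransform_congr (hK : ∀ᵐ t ∂σ, t ∈ K) {ρ₁ ρ₂ : ℝ → ℂ}
    (h : ∀ t ∈ K, ρ₁ t = ρ₂ t) (z : ℂ) : cauchyTransform σ ρ₁ z = cauchyTransform σ ρ₂ z :=
  integral_congr_ae (by filter_upwards [hK] with t ht; rw [h t ht])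

theorem ofReal_sub_ne_zero {z : ℂ} (hz : z ∉ (fun x : ℝ => (x : ℂ)) '' K) {t : ℝ}
    (ht : t ∈ K) : (t : ℂ) - z ≠ 0 :=
  sub_ne_zero.2 fun h => hz ⟨t, ht, h⟩

theorem continuousOn_inv_ofReal_sub {z : ℂ} (hz : z ∉ (fun x : ℝ => (x : ℂ)) '' K) :
    ContinuousOn (fun t : ℝ => ((t : ℂ) - z)⁻¹) K :=
  (Complex.continuous_ofReal.sub continuous_const).continuousOn.inv₀
    fun _ ht => ofReal_sub_ne_zero hz ht

variable [IsFiniteMeasure σ]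

theorem integrable_of_continuousOn {E : Type*} [NormedAddCommGroup E] (hKc : IsCompact K)
    (hK : ∀ᵐ t ∂σ, t ∈ K) {g : ℝ → E} (hg : ContinuousOn g K) : Integrable g σ := by
  rw [← Measure.restrict_eq_self_of_ae_mem hK]
  exact hg.integrableOn_compact hKc

theorem momentFunctional_apply (hKc : IsCompact K) (hK : ∀ᵐ t ∂σ, t ∈ K) {ρ : ℝ → ℂ}
    (hρ : ContinuousOn ρ K) (p : ℂ[X]) :
    momentFunctional σ ρ p = ∫ t, ρ t * p.eval (t : ℂ) ∂σ := by
  simp only [momentFunctional, lsum_apply, LinearMap.mulRight_apply, eval_eq_sum, sum_def,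
    mul_sum, mul_left_comm (ρ _)]
  rw [integral_finsetSum _ fun m _ => (integrable_of_continuousOn hKc hK
    (g := fun t => ρ t * (t : ℂ) ^ m)
    (hρ.mul (Complex.continuous_ofReal.pow m).continuousOn)).const_mul (p.coeff m)]
  simp only [integral_const_mul]

theorem eval_mul_cauchyTransform (hKc : IsCompact K) (hK : ∀ᵐ t ∂σ, t ∈ K) {ρ : ℝ → ℂ}
    (hρ : ContinuousOn ρ K) (p : ℂ[X]) {z : ℂ} (hz : z ∉ (fun x : ℝ => (x : ℂ)) '' K) :
    p.eval z * cauchyTransform σ ρ z =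
      cauchyTransform σ (fun t => ρ t * p.eval (t : ℂ)) z -
        (associatedPoly (momentFunctional σ ρ) p).eval z := by
  set q := ∑ i ∈ range (p.natDegree + 1), z ^ i • divX^[i + 1] p
  have hq : ∀ t : ℝ, ((t : ℂ) - z) * q.eval (t : ℂ) = p.eval (t : ℂ) - p.eval z := fun t => by
    simpa only [eval_mul, eval_sub, eval_X, eval_C] using
      congrArg (eval (t : ℂ)) (X_sub_C_mul_sum_divX_iterate p z)
  have hint : Integrable (fun t => p.eval z * (ρ t * ((t : ℂ) - z)⁻¹)) σ :=
    (integrable_of_continuousOn hKc hK (hρ.mul (continuousOn_inv_ofReal_sub hz))).const_mul _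
  rw [eval_associatedPoly, momentFunctional_apply hKc hK hρ, cauchyTransform, cauchyTransform,
    ← integral_const_mul, eq_sub_iff_add_eq, ← integral_add hint (integrable_of_continuousOn hKc hK
      (g := fun t => ρ t * q.eval (t : ℂ))
      (hρ.mul (q.continuous.comp Complex.continuous_ofReal).continuousOn))]
  refine integral_congr_ae ?_
  filter_upwards [hK] with t ht
  have hne := ofReal_sub_ne_zero hz ht
  field_simp
  linear_combination ρ t * hq t

theorem eval_associatedPoly_sub (hKc : IsCompact K) (hK : ∀ᵐ t ∂σ, t ∈ K) {ρ : ℝ → ℂ}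
    (hρ : ContinuousOn ρ K) {W Q : ℂ[X]} (hWQ : ∀ t ∈ K, ρ t * W.eval (t : ℂ) = Q.eval (t : ℂ))
    {z : ℂ} (hz : z ∉ (fun x : ℝ => (x : ℂ)) '' K) :
    (associatedPoly (momentFunctional σ ρ) W - associatedPoly (momentFunctional σ 1) Q).eval z =
      Q.eval z * cauchyTransform σ 1 z - W.eval z * cauchyTransform σ ρ z := by
  have hA := eval_mul_cauchyTransform hKc hK (ρ := 1) continuousOn_const Q hz
  have hC := eval_mul_cauchyTransform hKc hK hρ W hz
  rw [cauchyTransform_congr hK (ρ₁ := fun t => ρ t * W.eval (t : ℂ))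
    (ρ₂ := fun t => (1 : ℝ → ℂ) t * Q.eval (t : ℂ))
    (fun t ht => by rw [hWQ t ht, Pi.one_apply, one_mul])] at hC
  rw [eval_sub]
  linear_combination hC - hA

theorem continuousOn_cauchyTransform (hKc : IsCompact K) (hK : ∀ᵐ t ∂σ, t ∈ K) {ρ : ℝ → ℂ}
    (hρ : ContinuousOn ρ K) :
    ContinuousOn (cauchyTransform σ ρ) ((fun x : ℝ => (x : ℂ)) '' K)ᶜ := by
  have hΩ : IsOpen ((fun x : ℝ => (x : ℂ)) '' K)ᶜ :=
    (hKc.image Complex.continuous_ofReal).isClosed.isOpen_compl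
  intro z₀ hz₀
  obtain ⟨ε, hε, hball⟩ := Metric.isOpen_iff.1 hΩ z₀ hz₀
  have hdist : ∀ z ∈ Metric.ball z₀ (ε / 2), ∀ t ∈ K, ε / 2 ≤ ‖(t : ℂ) - z‖ := by
    intro z hz t ht
    have hfar : ε ≤ dist (t : ℂ) z₀ := not_lt.1 fun h => hball h ⟨t, ht, rfl⟩
    have := dist_triangle (t : ℂ) z z₀
    rw [Metric.mem_ball] at hz
    rw [← dist_eq_norm]
    linarith
  refine (continuousAt_of_dominated (bound := fun t => ‖ρ t‖ * (ε / 2)⁻¹)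
    ?_ ?_ ?_ ?_).continuousWithinAt
  · filter_upwards [hΩ.mem_nhds hz₀] with z hz using
      (integrable_of_continuousOn hKc hK (hρ.mul (continuousOn_inv_ofReal_sub hz))).1
  · filter_upwards [Metric.ball_mem_nhds z₀ (half_pos hε)] with z hz
    filter_upwards [hK] with t ht
    rw [norm_mul, norm_inv]
    gcongr
    exact hdist z hz t ht
  · exact (integrable_of_continuousOn hKc hK hρ.norm).mul_const _
  · filter_upwards [hK] with t ht
    exact continuousAt_const.mul
      ((continuousAt_const.sub continuousAt_id).inv₀ (ofReal_sub_ne_zero hz₀ ht))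

theorem IsPreconnected.forall_pos_or_forall_neg (hK : IsPreconnected K) {v : ℝ → ℝ}
    (hv : ContinuousOn v K) (hv0 : ∀ t ∈ K, v t ≠ 0) :
    (∀ t ∈ K, 0 < v t) ∨ ∀ t ∈ K, v t < 0 := by
  by_contra! h
  obtain ⟨⟨t₁, ht₁, h₁⟩, ⟨t₂, ht₂, h₂⟩⟩ := h
  obtain ⟨t, ht, hvt⟩ := hK.intermediate_value ht₁ ht₂ hv ⟨h₁, h₂⟩
  exact hv0 t ht hvt

theorem integral_mul_ne_zero (hKc : IsCompact K) (hKp : IsPreconnected K) (hK : ∀ᵐ t ∂σ, t ∈ K)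
    {g v : ℝ → ℝ} (hg : ContinuousOn g K) (hg0 : ∀ t, 0 ≤ g t) (hgσ : ¬ ∀ᵐ t ∂σ, g t = 0)
    (hv : ContinuousOn v K) (hv0 : ∀ t ∈ K, v t ≠ 0) : ∫ t, g t * v t ∂σ ≠ 0 := by
  have hsigned : ∀ c : ℝ, (∀ t ∈ K, 0 < c * v t) → c * ∫ t, g t * v t ∂σ ≠ 0 := by
    intro c hc hzero
    rw [← integral_const_mul] at hzero
    have hnn : 0 ≤ᵐ[σ] fun t => c * (g t * v t) := by
      filter_upwards [hK] with t ht
      simp only [Pi.zero_apply]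
      nlinarith [hg0 t, hc t ht]
    have hint := (integrable_of_continuousOn hKc hK (hg.mul hv)).const_mul c
    refine hgσ ?_
    filter_upwards [(integral_eq_zero_iff_of_nonneg_ae hnn hint).1 hzero, hK] with t h ht
    have h' : g t * (c * v t) = 0 := by simp only [Pi.zero_apply] at h; linear_combination h
    exact (mul_eq_zero.1 h').resolve_right (hc t ht).ne'
  intro h
  rcases hKp.forall_pos_or_forall_neg hv hv0 with hpos | hneg
  · exact hsigned 1 (by simpa using hpos) (by rw [h, mul_zero])
  · exact hsigned (-1) (fun t ht => by linarith [hneg t ht]) (by rw [h, mul_zero])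

theorem eval_map_conj_ofReal (p : ℂ[X]) (t : ℝ) :
    (p.map (starRingEnd ℂ)).eval (t : ℂ) = starRingEnd ℂ (p.eval (t : ℂ)) := by
  have h := eval₂_hom (starRingEnd ℂ) (t : ℂ) (p := p)
  rwa [Complex.conj_ofReal, ← eval_map] at h

theorem conj_eval_mul_cauchyTransform_ne_zero (hKc : IsCompact K) (hKp : IsPreconnected K)
    (hK : ∀ᵐ t ∂σ, t ∈ K) (hinf : (msupport σ).Infinite) {Q : ℂ[X]} (hQ0 : Q ≠ 0) {n : ℕ}
    (hQ : Q.degree ≤ n) {ω : ℝ → ℝ} (hω : ContinuousOn ω K) (hω0 : ∀ t ∈ K, ω t ≠ 0)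
    (horth : ∀ p : ℂ[X], p.degree < n → ∫ t : ℝ, Q.eval (t : ℂ) / ω t * p.eval (t : ℂ) ∂σ = 0)
    {x : ℝ} (hx : x ∉ K) :
    starRingEnd ℂ (Q.eval (x : ℂ)) *
      cauchyTransform σ (fun t : ℝ => Q.eval (t : ℂ) / ω t) x ≠ 0 := by
  have hQc : Continuous fun t : ℝ => Q.eval (t : ℂ) := Q.continuous.comp Complex.continuous_ofReal
  have hρ : ContinuousOn (fun t : ℝ => Q.eval (t : ℂ) / ω t) K :=
    hQc.continuousOn.div (Complex.continuous_ofReal.comp_continuousOn hω)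
      fun t ht => Complex.ofReal_ne_zero.2 (hω0 t ht)
  have hx' : (x : ℂ) ∉ (fun x : ℝ => (x : ℂ)) '' K :=
    fun ⟨t, ht, htx⟩ => hx (Complex.ofReal_injective htx ▸ ht)
  have hconj := eval_mul_cauchyTransform hKc hK hρ (Q.map (starRingEnd ℂ)) hx'
  rw [associatedPoly_eq_zero _ (fun p hp => (momentFunctional_apply hKc hK hρ p).trans
    (horth p hp)) (degree_map_le.trans hQ), eval_zero, sub_zero, eval_map_conj_ofReal] at hconj
  have hreal : cauchyTransform σ
      (fun t : ℝ => Q.eval (t : ℂ) / ω t * (Q.map (starRingEnd ℂ)).eval (t : ℂ)) x =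
      ((∫ t, Complex.normSq (Q.eval (t : ℂ)) * (ω t * (t - x))⁻¹ ∂σ : ℝ) : ℂ) := by
    rw [cauchyTransform]
    refine (integral_congr_ae ?_).trans integral_ofReal
    filter_upwards [hK] with t ht
    change _ = ((Complex.normSq (Q.eval (t : ℂ)) * (ω t * (t - x))⁻¹ : ℝ) : ℂ)
    rw [eval_map_conj_ofReal]
    push_cast
    rw [← Complex.mul_conj, mul_inv]
    ring
  have hωx : ∀ t ∈ K, ω t * (t - x) ≠ 0 := fun t ht =>
    mul_ne_zero (hω0 t ht) (sub_ne_zero.2 fun h => hx (h ▸ ht))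
  rw [hconj, hreal, Complex.ofReal_ne_zero]
  refine integral_mul_ne_zero hKc hKp hK (Complex.continuous_normSq.comp hQc).continuousOn
    (fun t => Complex.normSq_nonneg _) ?_ ?_ ?_
  · simpa only [Function.comp_apply, map_eq_zero] using not_ae_eval_eq_zero hinf hQ0
  · exact (hω.mul (continuousOn_id.sub continuousOn_const)).inv₀ hωx
  · exact fun t ht => inv_ne_zero (hωx t ht)

theorem hermite_interpolation {ι : Type*} [Fintype ι] (hKc : IsCompact K)
    (hK : ∀ᵐ t ∂σ, t ∈ K) {ζ : ι → ℂ} (hζ : ∀ k, ζ k ∉ (fun x : ℝ => (x : ℂ)) '' K) {n : ℕ}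
    (hn : 2 * n ≤ Fintype.card ι) {P Q : ℂ[X]} (hP : P.degree < n) (hQ : Q.degree ≤ n)
    {h : ℂ → ℂ} (hh : ContinuousOn h ((fun x : ℝ => (x : ℂ)) '' K)ᶜ)
    (heq : ∀ z ∈ ((fun x : ℝ => (x : ℂ)) '' K)ᶜ,
      Q.eval z * cauchyTransform σ 1 z - P.eval z = (∏ k, (z - ζ k)) * h z) :
    (∀ p : ℂ[X], p.degree < n →
        ∫ t : ℝ, Q.eval (t : ℂ) / (∏ k, ((t : ℂ) - ζ k)) * p.eval (t : ℂ) ∂σ = 0) ∧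
      ∀ z ∈ ((fun x : ℝ => (x : ℂ)) '' K)ᶜ, ∏ k, (z - ζ k) ≠ 0 →
        h z = cauchyTransform σ (fun t : ℝ => Q.eval (t : ℂ) / ∏ k, ((t : ℂ) - ζ k)) z := by
  set W : ℂ[X] := ∏ k, (X - C (ζ k))
  have hWeval : ∀ z, W.eval z = ∏ k, (z - ζ k) := fun z => by simp [W, eval_prod]
  have hWdeg : W.natDegree = Fintype.card ι := by simp [W]
  have hWK : ∀ t ∈ K, W.eval (t : ℂ) ≠ 0 := fun t ht => by
    rw [hWeval]; exact prod_ne_zero_iff.2 fun k _ => sub_ne_zero.2 fun h => hζ k ⟨t, ht, h⟩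
  set ρ : ℝ → ℂ := fun t => Q.eval (t : ℂ) / ∏ k, ((t : ℂ) - ζ k)
  have hρ : ContinuousOn ρ K := by
    simp only [ρ, ← hWeval]
    exact (Q.continuous.comp Complex.continuous_ofReal).continuousOn.div
      (W.continuous.comp Complex.continuous_ofReal).continuousOn hWK
  have hWQ : ∀ t ∈ K, ρ t * W.eval (t : ℂ) = Q.eval (t : ℂ) := fun t ht => by
    simp only [ρ, ← hWeval, div_mul_cancel₀ _ (hWK t ht)]
  set A := associatedPoly (momentFunctional σ 1) Q
  set C := associatedPoly (momentFunctional σ ρ) W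
  have hAdeg : A.degree < n :=
    (degree_associatedPoly_lt _ Q).trans_le (by exact_mod_cast natDegree_le_of_degree_le hQ)
  -- `Q f - P = W h` and `Q f - W u = C - A` give `C - A - P = W (h - u)`
  have hDeval : ∀ z ∈ ((fun x : ℝ => (x : ℂ)) '' K)ᶜ,
      (C - A - P).eval z = W.eval z * (h z - cauchyTransform σ ρ z) := fun z hz => by
    rw [eval_sub, eval_associatedPoly_sub hKc hK hρ hWQ hz, hWeval]
    linear_combination heq z hz
  have hn' : (n : WithBot ℕ) ≤ Fintype.card ι := by exact_mod_cast (by omega : n ≤ Fintype.card ι)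
  have hD : C - A - P = 0 :=
    eq_zero_of_forall_eval_eq_prod_mul (hKc.image Complex.continuous_ofReal).isClosed.isOpen_compl
      (hh.sub (continuousOn_cauchyTransform hKc hK hρ)) hζ
      (fun z hz => by rw [hDeval z hz, hWeval]; rfl)
      ((degree_sub_le _ _).trans_lt (max_lt ((degree_sub_le _ _).trans_lt (max_lt
        (hWdeg ▸ degree_associatedPoly_lt _ W) (hAdeg.trans_le hn'))) (hP.trans_le hn')))
  refine ⟨fun p hp => ?_, fun z hz hWz => ?_⟩
  · have hCdeg : C.degree < n := by
      rw [sub_sub, sub_eq_zero] at hD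
      exact hD ▸ (degree_add_le _ _).trans_lt (max_lt hAdeg hP)
    rw [← momentFunctional_apply hKc hK hρ]
    exact map_eq_zero_of_degree_associatedPoly_lt _ (monic_prod_X_sub_C ζ univ) (hWdeg ▸ hn)
      hCdeg hp
  · have hz0 := hDeval z hz
    rwa [hD, eval_zero, hWeval, eq_comm, mul_eq_zero, or_iff_right hWz, sub_eq_zero] at hz0

end CauchyTransform

theorem interpolation_error_zeros_general (σ : Measure ℝ) [IsFiniteMeasure σ] (a b : ℝ)
    (hsupp : σ (Set.Icc a b)ᶜ = 0) (hinf : (msupport σ).Infinite)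
    (n : ℕ) (hn : 1 ≤ n) (ζ : Fin (2 * n) → ℝ) (hζ : ∀ k, ζ k ∉ Set.Icc a b)
    (P Q : Polynomial ℂ) (hP : P.degree ≤ ((n - 1 : ℕ) : WithBot ℕ))
    (hQ : Q.degree ≤ (n : ℕ)) (hQ0 : Q ≠ 0) (h : ℂ → ℂ)
    (hh : DifferentiableOn ℂ h ((fun x : ℝ => (x : ℂ)) '' Set.Icc a b)ᶜ)
    (heq : ∀ z ∈ ((fun x : ℝ => (x : ℂ)) '' Set.Icc a b)ᶜ,
      Q.eval z * (∫ t, ((t : ℂ) - z)⁻¹ ∂σ) - P.eval z = (∏ k, (z - (ζ k : ℂ))) * h z) :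
    ∀ x : ℝ, x ∉ Set.Icc a b →
      ((∫ t, ((t : ℂ) - (x : ℂ))⁻¹ ∂σ) - P.eval (x : ℂ) / Q.eval (x : ℂ) = 0 ↔
        (∏ k, ((x : ℂ) - (ζ k : ℂ))) = 0) := by
  intro x hx
  have hK : ∀ᵐ t ∂σ, t ∈ Set.Icc a b := ae_iff.2 hsupp
  have hxΩ : (x : ℂ) ∉ (fun x : ℝ => (x : ℂ)) '' Set.Icc a b :=
    Complex.ofReal_injective.mem_set_image.not.2 hx
  obtain ⟨horth, hhu⟩ := hermite_interpolation isCompact_Icc hK (ζ := fun k => (ζ k : ℂ))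
    (fun k => Complex.ofReal_injective.mem_set_image.not.2 (hζ k)) (by simp)
    (hP.trans_lt (by exact_mod_cast (by omega : n - 1 < n))) hQ hh.continuousOn
    (by simpa only [cauchyTransform, Pi.one_apply, one_mul] using heq)
  simp only [← Complex.ofReal_sub, ← Complex.ofReal_prod] at horth hhu
  obtain ⟨hQx, hux⟩ := mul_ne_zero_iff.1 <| conj_eval_mul_cauchyTransform_ne_zero isCompact_Icc
    isPreconnected_Icc hK hinf hQ0 hQ (ω := fun t => ∏ k, (t - ζ k))
    (continuous_finsetProd _ fun k _ => continuous_id.sub continuous_const).continuousOn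
    (fun t ht => prod_ne_zero_iff.2 fun k _ => sub_ne_zero.2 fun h => hζ k (h ▸ ht)) horth hx
  rw [_root_.map_ne_zero] at hQx
  rw [sub_eq_zero, eq_div_iff hQx, ← sub_eq_zero, mul_comm, heq x hxΩ, mul_eq_zero,
    or_iff_left_iff_imp]
  intro hh0
  by_contra hW
  exact hux (hhu x hxΩ hW ▸ hh0)

/-- Zeros of the interpolation error: under the hypotheses of the Hermite interpolation
formula, for real `x ∉ F` the error `f(x) - P(x)/Q(x)` vanishes exactly at the
interpolation nodes, i.e. exactly where `W(x) = 0`. -/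
theorem interpolation_error_zeros (σ : Measure ℝ) [IsFiniteMeasure σ] (a b : ℝ)
    (hab : a ≤ b) (hsupp : σ (Set.Icc a b)ᶜ = 0) (hinf : (msupport σ).Infinite)
    (n : ℕ) (hn : 1 ≤ n) (ζ : Fin (2 * n) → ℝ) (hζ : ∀ k, ζ k ∉ Set.Icc a b)
    (P Q : Polynomial ℂ) (hP : P.degree ≤ ((n - 1 : ℕ) : WithBot ℕ))
    (hQ : Q.degree ≤ (n : ℕ)) (hQ0 : Q ≠ 0) (h : ℂ → ℂ)
    (hh : DifferentiableOn ℂ h ((fun x : ℝ => (x : ℂ)) '' Set.Icc a b)ᶜ)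
    (heq : ∀ z ∈ ((fun x : ℝ => (x : ℂ)) '' Set.Icc a b)ᶜ,
      Q.eval z * (∫ t, ((t : ℂ) - z)⁻¹ ∂σ) - P.eval z = (∏ k, (z - (ζ k : ℂ))) * h z) :
    ∀ x : ℝ, x ∉ Set.Icc a b →
      ((∫ t, ((t : ℂ) - (x : ℂ))⁻¹ ∂σ) - P.eval (x : ℂ) / Q.eval (x : ℂ) = 0 ↔
        (∏ k, ((x : ℂ) - (ζ k : ℂ))) = 0) :=
  interpolation_error_zeros_general σ a b hsupp hinf n hn ζ hζ P Q hP hQ hQ0 h hh heq
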